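/- arXiv:2301.05561 — 5 statements merged into one kernel-verified Lean document; each statement's English description precedes it below -/
import Mathlib

section
/- For all positive integers m and n, ∫₀¹ ({mx} − 1/2)({nx} − 1/2) dx = (1/12)·gcd(m,n)²/(mn). -/
/-!
Write `f(x) = {x} - 1/2` and `I(m, n) = ∫₀¹ f(mx) f(nx) dx`. Since `x ↦ f(mx) f(nx)` is 1-periodic,
`I(md, nd) = I(m, n)`, so we may assume `m` and `n` coprime. Substituting `x = t/n` and cutting
`[0, n]` into unit intervals gives `I(m, n) = n⁻¹ ∫₀¹ (∑_{j<n} f(mt/n + mj/n)) f(t) dt`. As `j` runs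
over the residues mod `n` so does `mj`, and the multiplication formula `∑_{j<n} f(y + j/n) = f(ny)`
turns the inner sum into `f(mt)`. Hence `I(m, n) = I(m, 1)/n = I(1, 1)/(mn) = 1/(12mn)`.
-/

open MeasureTheory Finset

noncomputable def sawtooth (x : ℝ) : ℝ := Int.fract x - 1 / 2

@[simp]
lemma sawtooth_add_natCast (x : ℝ) (k : ℕ) : sawtooth (x + k) = sawtooth x := by
  simp [sawtooth]

lemma sawtooth_periodic : Function.Periodic sawtooth 1 := by
  simpa using fun x => sawtooth_add_natCast x 1

lemma sawtooth_of_mem_Ico {x : ℝ} (h₀ : 0 ≤ x) (h₁ : x < 1) : sawtooth x = x - 1 / 2 := by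
  rw [sawtooth, Int.fract_eq_self.2 ⟨h₀, h₁⟩]

lemma abs_sawtooth_le (x : ℝ) : |sawtooth x| ≤ 1 / 2 := by
  rw [sawtooth, abs_le]
  constructor <;> linarith [Int.fract_nonneg x, Int.fract_lt_one x]

@[fun_prop]
lemma measurable_sawtooth : Measurable sawtooth :=
  measurable_fract.sub_const _

lemma intervalIntegrable_sawtooth_mul {φ ψ : ℝ → ℝ} (hφ : Measurable φ) (hψ : Measurable ψ)
    (a b : ℝ) : IntervalIntegrable (fun x => sawtooth (φ x) * sawtooth (ψ x)) volume a b := by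
  refine (intervalIntegrable_const (c := (1 / 4 : ℝ))).mono_fun'
    (Measurable.aestronglyMeasurable (by fun_prop)) (ae_of_all _ fun x => ?_)
  simp only [norm_mul, Real.norm_eq_abs]
  nlinarith [abs_sawtooth_le (φ x), abs_sawtooth_le (ψ x), abs_nonneg (sawtooth (φ x)),
    abs_nonneg (sawtooth (ψ x))]

lemma sum_range_natCast_mul_two {R : Type*} [CommRing R] (n : ℕ) :
    (∑ j ∈ range n, (j : R)) * 2 = n * (n - 1) := by
  induction n with
  | zero => simp
  | succ k ih => rw [sum_range_succ, add_mul, ih]; push_cast; ring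

lemma sum_sawtooth_add_div_of_mul_mem_Ico {n : ℕ} (hn : n ≠ 0) {y : ℝ} (h₀ : 0 ≤ n * y)
    (h₁ : n * y < 1) : ∑ j ∈ range n, sawtooth (y + j / n) = sawtooth (n * y) := by
  have hpos : (0 : ℝ) < n := by positivity
  have hterm : ∀ j ∈ range n, sawtooth (y + j / n) = y + j / n - 1 / 2 := by
    intro j hj
    have hj : (j : ℝ) + 1 ≤ n := by exact_mod_cast mem_range.1 hj
    rw [show y + j / n = (n * y + j) / n by field_simp]
    exact sawtooth_of_mem_Ico (by positivity) ((div_lt_one hpos).2 (by linarith))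
  rw [sum_congr rfl hterm, sawtooth_of_mem_Ico h₀ h₁, sum_sub_distrib, sum_add_distrib, ← sum_div,
    sum_const, sum_const, card_range, nsmul_eq_mul, nsmul_eq_mul]
  field_simp
  linear_combination sum_range_natCast_mul_two (R := ℝ) n

theorem sum_sawtooth_add_div {n : ℕ} (hn : n ≠ 0) (x : ℝ) :
    ∑ j ∈ range n, sawtooth (x + j / n) = sawtooth (n * x) := by
  have hn' : (n : ℝ) ≠ 0 := Nat.cast_ne_zero.2 hn
  -- The defect `H` is `1/n`-periodic and vanishes on `[0, 1/n)`.
  set H : ℝ → ℝ := fun x => ∑ j ∈ range n, sawtooth (x + j / n) - sawtooth (n * x) with hH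
  have hper : Function.Periodic H (1 / n) := by
    intro x
    have hshift : ∀ j : ℕ, x + 1 / n + j / n = x + (j + 1 : ℕ) / n := by
      intro j; push_cast; ring
    have hsucc' := sum_range_succ' (fun j : ℕ => sawtooth (x + j / n)) n
    have hsucc := sum_range_succ (fun j : ℕ => sawtooth (x + j / n)) n
    have hwrap : sawtooth (x + n / n) = sawtooth (x + (0 : ℕ) / n) := by
      simpa [hn'] using sawtooth_periodic x
    simp only [hH, hshift, mul_add, mul_one_div_cancel hn', sawtooth_periodic _]
    linarith
  have hy : (n : ℝ) * (x - ⌊(n : ℝ) * x⌋ * (1 / n)) = Int.fract (n * x) := by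
    rw [Int.fract]; field_simp
  rw [← sub_eq_zero]
  change H x = 0
  rw [← hper.sub_int_mul_eq ⌊(n : ℝ) * x⌋, hH, sub_eq_zero]
  exact sum_sawtooth_add_div_of_mul_mem_Ico hn (hy ▸ Int.fract_nonneg _)
    (hy ▸ Int.fract_lt_one _)

theorem Function.Periodic.sum_add_mul_div_of_coprime {M : Type*} [AddCommMonoid M] {φ : ℝ → M}
    (hφ : Function.Periodic φ 1) {m n : ℕ} (hmn : m.Coprime n) (y : ℝ) :
    ∑ j ∈ range n, φ (y + (m * j : ℕ) / n) = ∑ j ∈ range n, φ (y + j / n) := by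
  have hmod : ∀ k : ℕ, φ (y + k / n) = φ (y + (k % n : ℕ) / n) := by
    intro k
    rcases eq_or_ne n 0 with rfl | hn
    · simp
    have hsplit : y + k / n = y + (k % n : ℕ) / n + (k / n : ℕ) * 1 := by
      conv_lhs => rw [← Nat.mod_add_div k n]
      push_cast
      field_simp
      ring
    rw [hsplit, hφ.nat_mul]
  have hmaps : Set.MapsTo (fun j => m * j % n) (range n) (range n) := fun j hj =>
    mem_range.2 (Nat.mod_lt _ (pos_of_ne_zero (by rintro rfl; simp at hj)))
  have hinj : Set.InjOn (fun j => m * j % n) (range n) := by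
    intro a ha b hb hab
    rw [← Nat.mod_eq_of_lt (mem_range.1 ha), ← Nat.mod_eq_of_lt (mem_range.1 hb)]
    exact Nat.ModEq.cancel_left_of_coprime hmn.symm hab
  exact sum_nbij _ hmaps hinj
    (((finite_toSet _).injOn_iff_bijOn_of_mapsTo hmaps).1 hinj).surjOn fun j _ => hmod _

theorem intervalIntegral_comp_natCast_mul_eq_sum {E : Type*} [NormedAddCommGroup E]
    [NormedSpace ℝ E] {h : ℝ → E} {n : ℕ} (hn : n ≠ 0)
    (hh : ∀ k < n, IntervalIntegrable h volume k (k + 1)) :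
    ∫ x in (0 : ℝ)..1, h (n * x) = (n : ℝ)⁻¹ • ∑ j ∈ range n, ∫ x in (0 : ℝ)..1, h (x + j) := by
  rw [intervalIntegral.integral_comp_mul_left h (Nat.cast_ne_zero.2 hn), mul_zero, mul_one,
    ← Nat.cast_zero, ← intervalIntegral.sum_integral_adjacent_intervals (by simpa using hh)]
  congr 1
  refine sum_congr rfl fun j _ => ?_
  rw [intervalIntegral.integral_comp_add_right]
  push_cast
  ring_nf

theorem Function.Periodic.intervalIntegral_comp_natCast_mul {E : Type*} [NormedAddCommGroup E]
    [NormedSpace ℝ E] {h : ℝ → E} (hp : Function.Periodic h 1)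
    (hh : IntervalIntegrable h volume 0 1) {n : ℕ} (hn : n ≠ 0) :
    ∫ x in (0 : ℝ)..1, h (n * x) = ∫ x in (0 : ℝ)..1, h x := by
  have hint : ∀ a b : ℝ, IntervalIntegrable h volume a b :=
    hp.intervalIntegrable one_ne_zero (t := 0) (by simpa using hh)
  have hshift : ∀ j : ℕ, h = fun x => h (x + j) := fun j => funext fun x => by
    simpa using (hp.nat_mul j x).symm
  rw [intervalIntegral_comp_natCast_mul_eq_sum hn fun k _ => hint _ _]
  simp only [← hshift, sum_const, card_range, ← Nat.cast_smul_eq_nsmul ℝ]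
  exact inv_smul_smul₀ (Nat.cast_ne_zero.2 hn) _

noncomputable def sawtoothIntegral (m n : ℕ) : ℝ :=
  ∫ x in (0 : ℝ)..1, sawtooth (m * x) * sawtooth (n * x)

lemma sawtoothIntegral_comm (m n : ℕ) : sawtoothIntegral m n = sawtoothIntegral n m :=
  intervalIntegral.integral_congr fun _ _ => mul_comm _ _

lemma sawtoothIntegral_one_one : sawtoothIntegral 1 1 = 1 / 12 := by
  have hderiv : ∀ x ∈ Set.Ioo (0 : ℝ) 1,
      HasDerivAt (fun x => (x - 1 / 2) ^ 3 / 3) (sawtooth (1 * x) * sawtooth (1 * x)) x := by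
    intro x hx
    rw [one_mul, sawtooth_of_mem_Ico hx.1.le hx.2]
    exact (((hasDerivAt_id' x).sub_const (1 / 2)).fun_pow 3).div_const 3 |>.congr_deriv
      (by norm_num; ring)
  rw [sawtoothIntegral, Nat.cast_one, intervalIntegral.integral_eq_sub_of_hasDerivAt_of_le
    zero_le_one (by fun_prop) hderiv
    (intervalIntegrable_sawtooth_mul (by fun_prop) (by fun_prop) _ _)]
  norm_num

lemma sawtoothIntegral_mul_right {d : ℕ} (hd : d ≠ 0) (m n : ℕ) :
    sawtoothIntegral (m * d) (n * d) = sawtoothIntegral m n := by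
  have hp : Function.Periodic (fun t => sawtooth (m * t) * sawtooth (n * t)) 1 := fun t => by
    simp only [mul_add, mul_one, sawtooth_add_natCast]
  have := hp.intervalIntegral_comp_natCast_mul
    (intervalIntegrable_sawtooth_mul (by fun_prop) (by fun_prop) _ _) hd
  simpa only [sawtoothIntegral, Nat.cast_mul, mul_assoc] using this

lemma sawtoothIntegral_eq_div_of_coprime {m n : ℕ} (hn : n ≠ 0) (hmn : m.Coprime n) :
    sawtoothIntegral m n = sawtoothIntegral m 1 / n := by
  have hn' : (n : ℝ) ≠ 0 := Nat.cast_ne_zero.2 hn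
  set h : ℝ → ℝ := fun t => sawtooth (m * t / n) * sawtooth t with hh
  have hshift : ∀ (j : ℕ) (x : ℝ),
      h (x + j) = sawtooth (m * x / n + (m * j : ℕ) / n) * sawtooth x := by
    intro j x
    simp only [hh, sawtooth_add_natCast]
    push_cast
    ring_nf
  have hint : ∀ (j : ℕ) (a b : ℝ), IntervalIntegrable (fun x => h (x + j)) volume a b :=
    fun j => intervalIntegrable_sawtooth_mul (by fun_prop) (by fun_prop)
  calc sawtoothIntegral m n = ∫ x in (0 : ℝ)..1, h (n * x) :=
        intervalIntegral.integral_congr fun x _ => by simp only [hh]; field_simp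
    _ = (n : ℝ)⁻¹ * ∫ x in (0 : ℝ)..1, ∑ j ∈ range n, h (x + j) := by
        rw [intervalIntegral_comp_natCast_mul_eq_sum hn fun k _ => ?_, smul_eq_mul,
          intervalIntegral.integral_finsetSum fun j _ => hint j 0 1]
        simpa using hint 0 k (k + 1)
    _ = sawtoothIntegral m 1 / n := by
        simp only [hshift, ← sum_mul, sawtooth_periodic.sum_add_mul_div_of_coprime hmn,
          sum_sawtooth_add_div hn, mul_div_cancel₀ _ hn', sawtoothIntegral, Nat.cast_one, one_mul]
        rw [inv_mul_eq_div]

lemma sawtoothIntegral_of_coprime {m n : ℕ} (hm : m ≠ 0) (hn : n ≠ 0) (hmn : m.Coprime n) :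
    sawtoothIntegral m n = 1 / (12 * m * n) := by
  rw [sawtoothIntegral_eq_div_of_coprime hn hmn, sawtoothIntegral_comm,
    sawtoothIntegral_eq_div_of_coprime hm (Nat.coprime_one_left m), sawtoothIntegral_one_one]
  field_simp

theorem stmt_4 (m n : ℕ) (hm : 0 < m) (hn : 0 < n) :
    ∫ x in (0:ℝ)..1, (Int.fract ((m : ℝ) * x) - 1/2) * (Int.fract ((n : ℝ) * x) - 1/2)
      = (1/12) * (Nat.gcd m n : ℝ) ^ 2 / ((m : ℝ) * n) := by
  obtain ⟨d, m', n', hd, hcop, rfl, rfl⟩ := Nat.exists_coprime' (Nat.gcd_pos_of_pos_left n hm)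
  have hm' : m' ≠ 0 := by rintro rfl; simp at hm
  have hn' : n' ≠ 0 := by rintro rfl; simp at hn
  change sawtoothIntegral (m' * d) (n' * d) = _
  rw [sawtoothIntegral_mul_right hd.ne', sawtoothIntegral_of_coprime hm' hn' hcop,
    Nat.gcd_mul_right, hcop.gcd_eq_one]
  have hd' : (d : ℝ) ≠ 0 := by positivity
  push_cast
  field_simp
end

section
/- Let (X_n) be a sequence of real random variables on a probability space, and suppose there exist random variables X and Y with Y > 0 a.s. such that for every subsequence (X_{n_k}) the normalized sums (∑_{k=1}^N (X_{n_k} − X))/(Y√N) converge in distribution to the standard normal. Then the sequence (X_n) is bounded in probability, i.e., lim_{K→∞} sup_n P(|X_n| > K) = 0. -/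
/-!
If `(X_n)` were not bounded in probability, one could extract a subsequence `φ` with
`P(|X_{φ j}| > j) > ε` for all `j`. Along `φ` the normalized sums `S_N / (Y √N)`, where
`S_N = ∑_{k ≤ N} (X_{φ k} - X₀)`, converge in distribution and are therefore bounded in
probability. Since `X_{φ(N+1)} - X₀ = S_{N+1} - S_N`, with high probability
`|X_{φ(N+1)}| ≤ |X₀| + 2 C |Y| √(N+1) = o(N)`, so `P(|X_{φ j}| > j) → 0`, a contradiction.
-/

open MeasureTheory ProbabilityTheory Filter Set Topology ENNReal

lemma tendsto_measure_Iio_atTop (μ : Measure ℝ) :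
    Tendsto (fun t => μ (Iio t)) atTop (𝓝 (μ univ)) := by
  rw [← iUnion_Iio]
  exact tendsto_measure_iUnion_atTop monotone_Iio

lemma tendsto_measure_Iio_atBot (μ : Measure ℝ) [IsFiniteMeasure μ] :
    Tendsto (fun t => μ (Iio t)) atBot (𝓝 0) := by
  have hempty : ⋂ t : ℝ, Iio t = ∅ := iInter_eq_empty_iff.2 fun x => ⟨x, lt_irrefl x⟩
  simpa [hempty, Function.comp_def] using tendsto_measure_iInter_atBot (μ := μ)
    (fun t => measurableSet_Iio.nullMeasurableSet) monotone_Iio ⟨0, measure_ne_top μ _⟩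

lemma eventually_add_mul_sqrt_le (a b : ℝ) : ∀ᶠ x : ℝ in atTop, a + b * √x ≤ x := by
  filter_upwards [eventually_ge_atTop ((|a| + |b| + 1) ^ 2)] with x hx
  have hs : |a| + |b| + 1 ≤ √x := Real.le_sqrt_of_sq_le hx
  have hx' : √x * √x = x := Real.mul_self_sqrt (le_trans (by positivity) hx)
  nlinarith [le_abs_self a, abs_nonneg a, abs_nonneg b,
    mul_le_mul_of_nonneg_right (le_abs_self b) (Real.sqrt_nonneg x)]

lemma tendsto_limsup_of_forall_strictMono {u : ℕ → ℝ → ℝ≥0∞} (hu : ∀ n, Antitone (u n))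
    (h : ∀ φ : ℕ → ℕ, StrictMono φ → Tendsto (fun j : ℕ => u (φ j) j) atTop (𝓝 0)) :
    Tendsto (fun r => limsup (fun n => u n r) atTop) atTop (𝓝 0) := by
  by_contra hne
  obtain ⟨ε, hε, hfreq⟩ : ∃ ε > 0, ∀ R : ℝ, ∃ r ≥ R, ε < limsup (fun n => u n r) atTop := by
    simpa [ENNReal.tendsto_atTop_zero] using hne
  have hfreq' (j : ℕ) : ∃ᶠ n in atTop, ε < u n j := by
    obtain ⟨r, hr, hεr⟩ := hfreq j
    exact frequently_lt_of_lt_limsup (by isBoundedDefault)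
      (hεr.trans_le (limsup_le_limsup (.of_forall fun n => hu n hr)))
  obtain ⟨φ, hφ, hεφ⟩ := extraction_forall_of_frequently hfreq'
  obtain ⟨j, hj⟩ := ((h φ hφ).eventually (gt_mem_nhds hε)).exists
  exact (hεφ j).not_gt hj

section

variable {Ω : Type*}

noncomputable def normalizedSum (Z : ℕ → Ω → ℝ) (X₀ Y : Ω → ℝ) (N : ℕ) (ω : Ω) : ℝ :=
  (∑ k ∈ Finset.Icc 1 N, (Z k ω - X₀ ω)) / (Y ω * √N)

variable {Z : ℕ → Ω → ℝ} {X₀ Y : Ω → ℝ}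

lemma sum_eq_normalizedSum_mul {ω : Ω} (hY : Y ω ≠ 0) (N : ℕ) :
    ∑ k ∈ Finset.Icc 1 N, (Z k ω - X₀ ω) = normalizedSum Z X₀ Y N ω * (Y ω * √N) := by
  rcases N.eq_zero_or_pos with rfl | hN
  · simp
  · exact (div_mul_cancel₀ _ (by positivity)).symm

lemma abs_le_of_abs_normalizedSum_le {ω : Ω} {B C D : ℝ} {N : ℕ}
    (hY : Y ω ≠ 0) (hYB : |Y ω| ≤ B) (hX₀D : |X₀ ω| ≤ D)
    (hCN : |normalizedSum Z X₀ Y N ω| ≤ C) (hCN' : |normalizedSum Z X₀ Y (N + 1) ω| ≤ C) :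
    |Z (N + 1) ω| ≤ D + 2 * C * B * √((N + 1 : ℕ) : ℝ) := by
  set S := fun M => ∑ k ∈ Finset.Icc 1 M, (Z k ω - X₀ ω)
  have hZ : Z (N + 1) ω = X₀ ω + (S (N + 1) - S N) := by
    simp only [S, Finset.sum_Icc_succ_top (Nat.le_add_left 1 N)]
    ring
  have hS {M : ℕ} (hM : M ≤ N + 1) (hCM : |normalizedSum Z X₀ Y M ω| ≤ C) :
      |S M| ≤ C * B * √((N + 1 : ℕ) : ℝ) := by
    rw [show S M = _ from sum_eq_normalizedSum_mul hY M, abs_mul, abs_mul,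
      abs_of_nonneg (Real.sqrt_nonneg _), mul_assoc]
    have hC : 0 ≤ C := (abs_nonneg _).trans hCM
    gcongr
    exact (abs_nonneg _).trans hYB
  calc |Z (N + 1) ω| ≤ |X₀ ω| + (|S (N + 1)| + |S N|) := by
        rw [hZ]
        exact (abs_add_le _ _).trans (add_le_add_right (abs_sub _ _) _)
    _ ≤ D + (C * B * √((N + 1 : ℕ) : ℝ) + C * B * √((N + 1 : ℕ) : ℝ)) := by
        gcongr
        exacts [hS le_rfl hCN', hS N.le_succ hCN]
    _ = D + 2 * C * B * √((N + 1 : ℕ) : ℝ) := by ring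

lemma measurable_normalizedSum [MeasurableSpace Ω] (hZ : ∀ k, Measurable (Z k))
    (hX₀ : Measurable X₀) (hY : Measurable Y) (N : ℕ) :
    Measurable (normalizedSum Z X₀ Y N) := by
  unfold normalizedSum
  fun_prop

end

section

variable {Ω : Type*} [MeasurableSpace Ω] (P : Measure Ω)

def BoundedInProbability {ι : Type*} (X : ι → Ω → ℝ) : Prop :=
  Tendsto (fun r : ℝ => ⨆ i, P {ω | r < |X i ω|}) atTop (𝓝 0)

lemma antitone_measure_abs_gt (g : Ω → ℝ) : Antitone fun r : ℝ => P {ω | r < |g ω|} :=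
  fun _ _ hrs => measure_mono fun _ hω => hrs.trans_lt hω

lemma tendsto_measure_abs_gt_atTop [IsFiniteMeasure P] {g : Ω → ℝ} (hg : Measurable g) :
    Tendsto (fun r : ℝ => P {ω | r < |g ω|}) atTop (𝓝 0) := by
  have hempty : ⋂ r : ℝ, {ω | r < |g ω|} = ∅ :=
    iInter_eq_empty_iff.2 fun ω => ⟨|g ω|, lt_irrefl (|g ω|)⟩
  have hanti : Antitone fun r : ℝ => {ω | r < |g ω|} := fun _ _ hrs _ hω => hrs.trans_lt hω
  simpa [hempty, Function.comp_def] using tendsto_measure_iInter_atTop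
    (fun r => (measurableSet_lt measurable_const hg.abs).nullMeasurableSet) hanti
    ⟨0, measure_ne_top P _⟩

lemma boundedInProbability_of_tendsto_limsup [IsFiniteMeasure P] {X : ℕ → Ω → ℝ}
    (hX : ∀ n, Measurable (X n))
    (h : Tendsto (fun r : ℝ => limsup (fun n => P {ω | r < |X n ω|}) atTop) atTop (𝓝 0)) :
    BoundedInProbability P X :=
  Nat.tendsto_iSup_of_tendsto_limsup (fun n => tendsto_measure_abs_gt_atTop P (hX n)) h
    fun n => antitone_measure_abs_gt P (X n)

lemma measure_abs_gt_le [IsProbabilityMeasure P] {U : Ω → ℝ} (hU : Measurable U) (r : ℝ) :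
    P {ω | r < |U ω|} ≤ P {ω | U ω < -r} + (1 - P {ω | U ω < r}) := by
  rw [← prob_compl_eq_one_sub (measurableSet_lt hU measurable_const)]
  refine (measure_mono fun ω hω => ?_).trans (measure_union_le _ _)
  rcases lt_abs.1 (show r < |U ω| from hω) with h | h
  · exact Or.inr (not_lt.2 h.le)
  · exact Or.inl (lt_neg.1 h)

lemma boundedInProbability_of_tendsto_measure_lt [IsProbabilityMeasure P] {U : ℕ → Ω → ℝ}
    (hU : ∀ N, Measurable (U N)) (μ : Measure ℝ) [IsProbabilityMeasure μ]
    (h : ∀ t, Tendsto (fun N => P {ω | U N ω < t}) atTop (𝓝 (μ (Iio t)))) :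
    BoundedInProbability P U := by
  refine boundedInProbability_of_tendsto_limsup P hU ?_
  have hlimsup (r : ℝ) :
      limsup (fun N => P {ω | r < |U N ω|}) atTop ≤ μ (Iio (-r)) + (1 - μ (Iio r)) := by
    have hlim := (h (-r)).add (ENNReal.Tendsto.sub tendsto_const_nhds (h r) (.inl one_ne_top))
    exact (limsup_le_limsup (.of_forall fun N => measure_abs_gt_le P (hU N) r)).trans
      hlim.limsup_eq.le
  have hbound : Tendsto (fun r : ℝ => μ (Iio (-r)) + (1 - μ (Iio r))) atTop (𝓝 0) := by
    simpa using ((tendsto_measure_Iio_atBot μ).comp tendsto_neg_atTop_atBot).add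
      (ENNReal.Tendsto.sub tendsto_const_nhds (tendsto_measure_Iio_atTop μ) (.inl one_ne_top))
  exact tendsto_of_tendsto_of_tendsto_of_le_of_le tendsto_const_nhds hbound (fun _ => zero_le)
    hlimsup

lemma tendsto_measure_abs_gt_of_boundedInProbability_normalizedSum [IsFiniteMeasure P]
    {Z : ℕ → Ω → ℝ} {X₀ Y : Ω → ℝ}
    (hX₀ : Measurable X₀) (hY : Measurable Y) (hY0 : ∀ᵐ ω ∂P, Y ω ≠ 0)
    (hU : BoundedInProbability P (normalizedSum Z X₀ Y)) :
    Tendsto (fun Q : ℕ => P {ω | (Q : ℝ) < |Z Q ω|}) atTop (𝓝 0) := by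
  rw [← tendsto_add_atTop_iff_nat 1, ENNReal.tendsto_atTop_zero]
  intro ε hε
  have hε' : 0 < ε / 2 / 2 := ENNReal.half_pos (ENNReal.half_pos hε.ne').ne'
  obtain ⟨C, hC⟩ := ENNReal.tendsto_atTop_zero.1 hU _ hε'
  obtain ⟨B, hB⟩ := ENNReal.tendsto_atTop_zero.1 (tendsto_measure_abs_gt_atTop P hY) _ hε'
  obtain ⟨D, hD⟩ := ENNReal.tendsto_atTop_zero.1 (tendsto_measure_abs_gt_atTop P hX₀) _ hε'
  obtain ⟨N₀, hN₀⟩ := eventually_atTop.1 <|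
    (tendsto_natCast_atTop_atTop.comp (tendsto_add_atTop_nat 1)).eventually
      (eventually_add_mul_sqrt_le D (2 * C * B))
  refine ⟨N₀, fun N hN => ?_⟩
  have hU' (M : ℕ) : P {ω | C < |normalizedSum Z X₀ Y M ω|} ≤ ε / 2 / 2 :=
    (le_iSup (fun M => P {ω | C < |normalizedSum Z X₀ Y M ω|}) M).trans (hC C le_rfl)
  calc P {ω | ((N + 1 : ℕ) : ℝ) < |Z (N + 1) ω|}
      ≤ P (({ω | D < |X₀ ω|} ∪ {ω | B < |Y ω|}) ∪
          ({ω | C < |normalizedSum Z X₀ Y N ω|} ∪ {ω | C < |normalizedSum Z X₀ Y (N + 1) ω|})) := by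
        refine measure_mono_ae ?_
        filter_upwards [hY0] with ω hYω hω
        change ω ∈ (_ : Set Ω)
        by_contra hgood
        simp only [mem_union, mem_ofPred_eq, not_or, not_lt] at hgood
        obtain ⟨⟨hX₀D, hYB⟩, hCN, hCN'⟩ := hgood
        exact (hω : _ < _).not_ge
          ((abs_le_of_abs_normalizedSum_le hYω hYB hX₀D hCN hCN').trans (hN₀ N hN))
    _ ≤ (ε / 2 / 2 + ε / 2 / 2) + (ε / 2 / 2 + ε / 2 / 2) := by
        refine (measure_union_le _ _).trans (add_le_add ?_ ?_) <;>
          refine (measure_union_le _ _).trans (add_le_add ?_ ?_)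
        exacts [hD D le_rfl, hB B le_rfl, hU' N, hU' (N + 1)]
    _ = ε := by rw [ENNReal.add_halves, ENNReal.add_halves]

end

theorem stmt_9 {Ω : Type*} [MeasurableSpace Ω] (P : Measure Ω) [IsProbabilityMeasure P]
    (X : ℕ → Ω → ℝ) (hX : ∀ n, Measurable (X n))
    (X₀ Y : Ω → ℝ) (hX₀ : Measurable X₀) (hY : Measurable Y)
    (hYpos : ∀ᵐ ω ∂P, 0 < Y ω)
    (hCLT : ∀ n : ℕ → ℕ, StrictMono n → ∀ t : ℝ,
      Tendsto (fun N : ℕ =>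
          (P {ω | (∑ k ∈ Finset.Icc 1 N, (X (n k) ω - X₀ ω)) / (Y ω * Real.sqrt N) < t}).toReal)
        atTop (nhds ((gaussianReal 0 1 (Set.Iio t)).toReal))) :
    Tendsto (fun K : ℕ => ⨆ n : ℕ, (P {ω | (K : ℝ) < |X n ω|}).toReal)
      atTop (nhds 0) := by
  have hU (φ : ℕ → ℕ) (hφ : StrictMono φ) :
      BoundedInProbability P (normalizedSum (X ∘ φ) X₀ Y) :=
    boundedInProbability_of_tendsto_measure_lt P
      (measurable_normalizedSum (fun k => hX (φ k)) hX₀ hY) (gaussianReal 0 1) fun t =>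
        (ENNReal.tendsto_toReal_iff (fun _ => measure_ne_top _ _) (measure_ne_top _ _)).1
          (hCLT φ hφ t)
  have hbdd : BoundedInProbability P X :=
    boundedInProbability_of_tendsto_limsup P hX <|
      tendsto_limsup_of_forall_strictMono (fun n => antitone_measure_abs_gt P (X n)) fun φ hφ =>
        tendsto_measure_abs_gt_of_boundedInProbability_normalizedSum P hX₀ hY
          (hYpos.mono fun _ h => h.ne') (hU φ hφ)
  simpa [Function.comp_def, ENNReal.toReal_iSup (fun n => measure_ne_top P _)] using
    (ENNReal.tendsto_toReal ENNReal.zero_ne_top).comp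
      (hbdd.comp tendsto_natCast_atTop_atTop)
end

section
/- Let (X_n) be a sequence of random variables and let X, Y, X*, Y* be random variables with Y > 0 and Y* > 0 a.s. Suppose that for every event A with P(A) > 0, the conditional distributions of (∑_{k=1}^N (X_k − X))/(Y√N) given A converge to the standard normal, and the same holds with X, Y replaced by X*, Y*. Then X = X* a.s. and Y = Y* a.s. -/
open MeasureTheory ProbabilityTheory Filter

/-!
Let `T_N`, `T'_N` be the two normalised sums and `Φ` the standard normal distribution function.
Since both converge mixingly to `Φ`, an inclusion between `{T'_N < t}` and `{T_N < s}` on an event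
`A` of positive probability for all large `N` forces `Φ(t) ≤ Φ(s)`. Where the centres differ by at
least `δ` and `Y'` is bounded, the drift `N (X₀ - X₀')` outgrows the fluctuation scale `√N`, so
`{T'_N < 1} ⊆ {T_N < 0}` on `A` for large `N`, whence `Φ(1) ≤ Φ(0)`, impossible. Once the centres
agree, `T'_N = T_N · Y / Y'`, and on `{c Y ≤ Y'}` with `c > 1` this gives
`{T_N < 1} ⊆ {T'_N < c⁻¹}`, hence `Φ(1) ≤ Φ(c⁻¹)`, again impossible. Exhausting by countably many
such events gives `X₀ = X₀'` and `Y = Y'` almost surely.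
-/

namespace ProbabilityTheory

open Set Topology

variable {Ω : Type*} [MeasurableSpace Ω]

lemma strictMono_measure_Iio_toReal (ν : Measure ℝ) [IsFiniteMeasure ν]
    [ν.IsOpenPosMeasure] : StrictMono fun t => (ν (Iio t)).toReal := by
  intro s t hst
  have hsplit : ν (Iio t) = ν (Iio s) + ν (Ico s t) := by
    rw [← Iio_union_Ico_eq_Iio hst.le,
      measure_union ((Iio_disjoint_Ici le_rfl).mono_right Ico_subset_Ici_self) measurableSet_Ico]
  have hIco : ν (Ico s t) ≠ 0 :=
    ((Measure.measure_Ioo_pos ν).2 hst).trans_le (measure_mono Ioo_subset_Ico_self) |>.ne'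
  refine (ENNReal.toReal_lt_toReal (measure_ne_top _ _) (measure_ne_top _ _)).2 ?_
  rw [hsplit]
  exact ENNReal.lt_add_right (measure_ne_top _ _) hIco

lemma strictMono_gaussianReal_Iio_toReal (μ : ℝ) {v : NNReal} (hv : v ≠ 0) :
    StrictMono fun t => (gaussianReal μ v (Iio t)).toReal :=
  have := (gaussianReal_absolutelyContinuous' μ hv).isOpenPosMeasure
  strictMono_measure_Iio_toReal _

/-- Rényi's mixing convergence: conditionally on every non-null event, `Z N` converges in
distribution to `ν`. -/
def TendstoMixing (P : Measure Ω) (Z : ℕ → Ω → ℝ) (ν : Measure ℝ) : Prop :=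
  ∀ A : Set Ω, MeasurableSet A → 0 < P A → ∀ t : ℝ,
    Tendsto (fun N => ((P[|A]) {ω | Z N ω < t}).toReal) atTop (𝓝 (ν (Iio t)).toReal)

lemma TendstoMixing.measure_eq_zero {P : Measure Ω} [IsFiniteMeasure P] {F G : ℕ → Ω → ℝ}
    {ν : Measure ℝ} (hF : TendstoMixing P F ν) (hG : TendstoMixing P G ν) {s t : ℝ}
    (hst : (ν (Iio s)).toReal < (ν (Iio t)).toReal) {A : Set Ω} (hA : MeasurableSet A)
    (hFG : ∀ᶠ N in atTop, ∀ᵐ ω ∂P, ω ∈ A → F N ω < t → G N ω < s) : P A = 0 := by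
  by_contra hA0
  have hApos := pos_iff_ne_zero.2 hA0
  have := cond_isProbabilityMeasure (μ := P) hA0
  have hle : ∀ᶠ N in atTop, ((P[|A]) {ω | F N ω < t}).toReal ≤
      ((P[|A]) {ω | G N ω < s}).toReal := by
    filter_upwards [hFG] with N hN
    refine ENNReal.toReal_mono (measure_ne_top _ _) ?_
    rw [cond_apply hA, cond_apply hA]
    refine mul_le_mul_right (measure_mono_ae ?_) _
    filter_upwards [hN] with ω hω hmem
    exact ⟨hmem.1, hω hmem.1 hmem.2⟩
  exact (le_of_tendsto_of_tendsto (hF A hA hApos t) (hG A hA hApos s) hle).not_gt hst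

lemma sum_Icc_sub_eq_sub_mul (x : ℕ → ℝ) (a b : ℝ) (N : ℕ) :
    ∑ k ∈ Finset.Icc 1 N, (x k - a) = ∑ k ∈ Finset.Icc 1 N, (x k - b) - N * (a - b) := by
  simp only [Finset.sum_sub_distrib, Finset.sum_const, Nat.card_Icc, nsmul_eq_mul]
  push_cast
  ring

noncomputable def normalizedSum (X : ℕ → Ω → ℝ) (X₀ Y : Ω → ℝ) (N : ℕ) (ω : Ω) : ℝ :=
  (∑ k ∈ Finset.Icc 1 N, (X k ω - X₀ ω)) / (Y ω * √N)

section Uniqueness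

variable {P : Measure Ω} [IsFiniteMeasure P] {ν : Measure ℝ} {X : ℕ → Ω → ℝ} {X₀ Y X₀' Y' : Ω → ℝ}

lemma measure_center_shift_eq_zero (hν : StrictMono fun t => (ν (Iio t)).toReal)
    (hT : TendstoMixing P (normalizedSum X X₀ Y) ν)
    (hT' : TendstoMixing P (normalizedSum X X₀' Y') ν)
    (hX₀ : Measurable X₀) (hX₀' : Measurable X₀') (hY' : Measurable Y')
    (hYpos : ∀ᵐ ω ∂P, 0 < Y ω) (hY'pos : ∀ᵐ ω ∂P, 0 < Y' ω) {δ m : ℝ} (hδ : 0 < δ) :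
    P {ω | X₀' ω + δ ≤ X₀ ω ∧ Y' ω ≤ m} = 0 := by
  refine hT'.measure_eq_zero hT (hν zero_lt_one)
    ((measurableSet_le (hX₀'.add_const δ) hX₀).inter (measurableSet_le hY' measurable_const)) ?_
  have hgrow : ∀ᶠ N : ℕ in atTop, m ≤ δ * √N :=
    ((Real.tendsto_sqrt_atTop.comp tendsto_natCast_atTop_atTop).eventually_ge_atTop (m / δ)).mono
      fun N hN => (div_le_iff₀' hδ).1 hN
  filter_upwards [hgrow, eventually_gt_atTop 0] with N hN hN0
  filter_upwards [hYpos, hY'pos] with ω hY hY' ⟨hgap, hm⟩ hlt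
  have hsqrt : 0 < √(N : ℝ) := by positivity
  have hsq := Real.mul_self_sqrt (Nat.cast_nonneg (α := ℝ) N)
  rw [normalizedSum, div_lt_one (by positivity)] at hlt
  rw [normalizedSum, sum_Icc_sub_eq_sub_mul _ _ (X₀' ω)]
  refine div_neg_of_neg_of_pos ?_ (by positivity)
  nlinarith

lemma center_ae_le_of_tendstoMixing (hν : StrictMono fun t => (ν (Iio t)).toReal)
    (hT : TendstoMixing P (normalizedSum X X₀ Y) ν)
    (hT' : TendstoMixing P (normalizedSum X X₀' Y') ν)
    (hX₀ : Measurable X₀) (hX₀' : Measurable X₀') (hY' : Measurable Y')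
    (hYpos : ∀ᵐ ω ∂P, 0 < Y ω) (hY'pos : ∀ᵐ ω ∂P, 0 < Y' ω) : X₀ ≤ᵐ[P] X₀' := by
  have hnull : ∀ n m : ℕ, ∀ᵐ ω ∂P, ¬ (X₀' ω + 1 / (n + 1) ≤ X₀ ω ∧ Y' ω ≤ m) := fun n m =>
    measure_eq_zero_iff_ae_notMem.1 <| measure_center_shift_eq_zero hν hT hT' hX₀ hX₀' hY'
      hYpos hY'pos n.one_div_pos_of_nat
  filter_upwards [ae_all_iff.2 fun n => ae_all_iff.2 (hnull n)] with ω hω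
  by_contra! hlt
  obtain ⟨n, hn⟩ := exists_nat_one_div_lt (sub_pos.2 hlt)
  obtain ⟨m, hm⟩ := exists_nat_ge (Y' ω)
  exact hω n m ⟨by linarith, hm⟩

lemma measure_scale_shift_eq_zero (hν : StrictMono fun t => (ν (Iio t)).toReal)
    (hT : TendstoMixing P (normalizedSum X X₀ Y) ν)
    (hT' : TendstoMixing P (normalizedSum X X₀' Y') ν) (hcenter : X₀ =ᵐ[P] X₀')
    (hY : Measurable Y) (hY' : Measurable Y')
    (hYpos : ∀ᵐ ω ∂P, 0 < Y ω) (hY'pos : ∀ᵐ ω ∂P, 0 < Y' ω) {c : ℝ} (hc : 1 < c) :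
    P {ω | c * Y ω ≤ Y' ω} = 0 := by
  refine hT.measure_eq_zero hT' (hν (inv_lt_one_of_one_lt₀ hc))
    (measurableSet_le (hY.const_mul c) hY') (Eventually.of_forall fun N => ?_)
  filter_upwards [hcenter, hYpos, hY'pos] with ω hω hY hY' hcY hlt
  have hrescale : normalizedSum X X₀' Y' N ω = normalizedSum X X₀ Y N ω * (Y ω / Y' ω) := by
    simp only [normalizedSum, hω]
    field_simp
  calc normalizedSum X X₀' Y' N ω < 1 * (Y ω / Y' ω) := by
        rw [hrescale]; exact mul_lt_mul_of_pos_right hlt (by positivity)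
    _ ≤ c⁻¹ := by
        rw [one_mul, div_le_iff₀ hY', le_inv_mul_iff₀ (by linarith)]
        exact hcY

lemma scale_ae_le_of_tendstoMixing (hν : StrictMono fun t => (ν (Iio t)).toReal)
    (hT : TendstoMixing P (normalizedSum X X₀ Y) ν)
    (hT' : TendstoMixing P (normalizedSum X X₀' Y') ν) (hcenter : X₀ =ᵐ[P] X₀')
    (hY : Measurable Y) (hY' : Measurable Y')
    (hYpos : ∀ᵐ ω ∂P, 0 < Y ω) (hY'pos : ∀ᵐ ω ∂P, 0 < Y' ω) : Y' ≤ᵐ[P] Y := by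
  have hnull : ∀ n : ℕ, ∀ᵐ ω ∂P, ¬ ((1 + 1 / (n + 1)) * Y ω ≤ Y' ω) := fun n =>
    measure_eq_zero_iff_ae_notMem.1 <| measure_scale_shift_eq_zero hν hT hT' hcenter hY hY'
      hYpos hY'pos (lt_add_of_pos_right 1 n.one_div_pos_of_nat)
  filter_upwards [ae_all_iff.2 hnull, hYpos] with ω hω hY
  by_contra! hlt
  obtain ⟨n, hn⟩ := exists_nat_one_div_lt (div_pos (sub_pos.2 hlt) hY)
  rw [lt_div_iff₀ hY] at hn
  exact hω n (by linarith)

end Uniqueness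

end ProbabilityTheory

theorem stmt_10_general {Ω : Type*} [MeasurableSpace Ω] (P : Measure Ω) [IsProbabilityMeasure P]
    (X : ℕ → Ω → ℝ)
    (X₀ Y X₀' Y' : Ω → ℝ)
    (hX₀ : Measurable X₀) (hY : Measurable Y) (hX₀' : Measurable X₀') (hY' : Measurable Y')
    (hYpos : ∀ᵐ ω ∂P, 0 < Y ω) (hY'pos : ∀ᵐ ω ∂P, 0 < Y' ω)
    (hCLT : ∀ A : Set Ω, MeasurableSet A → 0 < P A → ∀ t : ℝ,
      Tendsto (fun N : ℕ =>
          ((P[|A]) {ω | (∑ k ∈ Finset.Icc 1 N, (X k ω - X₀ ω)) / (Y ω * Real.sqrt N) < t}).toReal)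
        atTop (nhds ((gaussianReal 0 1 (Set.Iio t)).toReal)))
    (hCLT' : ∀ A : Set Ω, MeasurableSet A → 0 < P A → ∀ t : ℝ,
      Tendsto (fun N : ℕ =>
          ((P[|A]) {ω | (∑ k ∈ Finset.Icc 1 N, (X k ω - X₀' ω)) / (Y' ω * Real.sqrt N) < t}).toReal)
        atTop (nhds ((gaussianReal 0 1 (Set.Iio t)).toReal))) :
    X₀ =ᵐ[P] X₀' ∧ Y =ᵐ[P] Y' := by
  have hΦ := strictMono_gaussianReal_Iio_toReal 0 one_ne_zero
  have hcenter : X₀ =ᵐ[P] X₀' :=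
    (center_ae_le_of_tendstoMixing hΦ hCLT hCLT' hX₀ hX₀' hY' hYpos hY'pos).antisymm
      (center_ae_le_of_tendstoMixing hΦ hCLT' hCLT hX₀' hX₀ hY hY'pos hYpos)
  exact ⟨hcenter,
    (scale_ae_le_of_tendstoMixing hΦ hCLT' hCLT hcenter.symm hY' hY hY'pos hYpos).antisymm
      (scale_ae_le_of_tendstoMixing hΦ hCLT hCLT' hcenter hY hY' hYpos hY'pos)⟩

theorem stmt_10 {Ω : Type*} [MeasurableSpace Ω] (P : Measure Ω) [IsProbabilityMeasure P]
    (X : ℕ → Ω → ℝ) (hX : ∀ n, Measurable (X n))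
    (X₀ Y X₀' Y' : Ω → ℝ)
    (hX₀ : Measurable X₀) (hY : Measurable Y) (hX₀' : Measurable X₀') (hY' : Measurable Y')
    (hYpos : ∀ᵐ ω ∂P, 0 < Y ω) (hY'pos : ∀ᵐ ω ∂P, 0 < Y' ω)
    (hCLT : ∀ A : Set Ω, MeasurableSet A → 0 < P A → ∀ t : ℝ,
      Tendsto (fun N : ℕ =>
          ((P[|A]) {ω | (∑ k ∈ Finset.Icc 1 N, (X k ω - X₀ ω)) / (Y ω * Real.sqrt N) < t}).toReal)
        atTop (nhds ((gaussianReal 0 1 (Set.Iio t)).toReal)))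
    (hCLT' : ∀ A : Set Ω, MeasurableSet A → 0 < P A → ∀ t : ℝ,
      Tendsto (fun N : ℕ =>
          ((P[|A]) {ω | (∑ k ∈ Finset.Icc 1 N, (X k ω - X₀' ω)) / (Y' ω * Real.sqrt N) < t}).toReal)
        atTop (nhds ((gaussianReal 0 1 (Set.Iio t)).toReal))) :
    X₀ =ᵐ[P] X₀' ∧ Y =ᵐ[P] Y' :=
  stmt_10_general P X X₀ Y X₀' Y' hX₀ hY hX₀' hY' hYpos hY'pos hCLT hCLT'
end

section
/- Let ξ and η be i.i.d. real random variables with distribution function F and let t > 0 with P(|ξ| ≤ t) ≥ 1/2. Then E[(ξ−η)²·1_{|ξ|≤t, |η|≤t}] ≥ ∫_{|x|≤t} x² dF(x) − 2(∫_{|x|≤t} x dF(x))². -/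
/-!
Independence makes the joint law of `(ξ, η)` the product `μ ⊗ μ` of the common law `μ`, so with
`S = {|x| ≤ t}`, `p = μ(S)`, `s = ∫_S x² dμ` and `m = ∫_S x dμ`, expanding `(x - y)²` over `S × S`
gives exactly `2 p s - 2 m²`. Since `p ≥ 1/2` and `s ≥ 0`, this is at least `s - 2 m²`.
-/

open MeasureTheory ProbabilityTheory

theorem integral_sub_sq_prod_self {ν : Measure ℝ} [IsFiniteMeasure ν] (h₁ : Integrable id ν)
    (h₂ : Integrable (· ^ 2) ν) :
    ∫ z, (z.1 - z.2) ^ 2 ∂(ν.prod ν) = 2 * ν.real .univ * ∫ x, x ^ 2 ∂ν - 2 * (∫ x, x ∂ν) ^ 2 := by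
  have hexpand : (fun z : ℝ × ℝ ↦ (z.1 - z.2) ^ 2) =
      fun z ↦ z.1 ^ 2 + z.2 ^ 2 - 2 * (z.1 * z.2) := by
    ext z; ring
  have hfst : Integrable (fun z : ℝ × ℝ ↦ z.1 ^ 2) (ν.prod ν) := h₂.comp_fst ν
  have hsnd : Integrable (fun z : ℝ × ℝ ↦ z.2 ^ 2) (ν.prod ν) := h₂.comp_snd ν
  have hmul : Integrable (fun z : ℝ × ℝ ↦ z.1 * z.2) (ν.prod ν) := h₁.mul_prod h₁
  have hsum : Integrable (fun z : ℝ × ℝ ↦ z.1 ^ 2 + z.2 ^ 2) (ν.prod ν) := hfst.add hsnd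
  rw [hexpand, integral_sub hsum (hmul.const_mul 2), integral_add hfst hsnd,
    integral_const_mul, integral_fun_fst (fun x : ℝ ↦ x ^ 2), integral_fun_snd (fun x : ℝ ↦ x ^ 2),
    integral_prod_mul (fun x : ℝ ↦ x) (fun x : ℝ ↦ x), smul_eq_mul]
  ring

theorem ProbabilityTheory.IdentDistrib.setIntegral_sub_sq_of_indepFun {Ω : Type*} [MeasurableSpace Ω]
    {P : Measure Ω} [IsFiniteMeasure P] {ξ η : Ω → ℝ} (hindep : IndepFun ξ η P)
    (hid : IdentDistrib ξ η P P) {S : Set ℝ} (hS : MeasurableSet S)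
    (h₁ : IntegrableOn id S (P.map ξ)) (h₂ : IntegrableOn (· ^ 2) S (P.map ξ)) :
    ∫ ω in ξ ⁻¹' S ∩ η ⁻¹' S, (ξ ω - η ω) ^ 2 ∂P =
      2 * (P.map ξ).real S * ∫ x in S, x ^ 2 ∂(P.map ξ) - 2 * (∫ x in S, x ∂(P.map ξ)) ^ 2 := by
  have hjoint : P.map (fun ω ↦ (ξ ω, η ω)) = (P.map ξ).prod (P.map ξ) := by
    rw [(indepFun_iff_map_prod_eq_prod_map_map hid.aemeasurable_fst hid.aemeasurable_snd).1
      hindep, hid.map_eq]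
  have hpair : AEMeasurable (fun ω ↦ (ξ ω, η ω)) P :=
    hid.aemeasurable_fst.prodMk hid.aemeasurable_snd
  calc ∫ ω in ξ ⁻¹' S ∩ η ⁻¹' S, (ξ ω - η ω) ^ 2 ∂P
      = ∫ z in S ×ˢ S, (z.1 - z.2) ^ 2 ∂P.map (fun ω ↦ (ξ ω, η ω)) :=
        (setIntegral_map (f := fun z : ℝ × ℝ ↦ (z.1 - z.2) ^ 2) (hS.prod hS) (by fun_prop)
          hpair).symm
    _ = ∫ z, (z.1 - z.2) ^ 2 ∂((P.map ξ).restrict S).prod ((P.map ξ).restrict S) := by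
        rw [hjoint, Measure.prod_restrict]
    _ = _ := by
        rw [integral_sub_sq_prod_self h₁ h₂, measureReal_restrict_apply_univ]

theorem stmt_11_general {Ω : Type*} [MeasurableSpace Ω] (P : Measure Ω) [IsProbabilityMeasure P]
    (ξ η : Ω → ℝ)
    (hindep : IndepFun ξ η P) (hid : IdentDistrib ξ η P P)
    (t : ℝ)
    (hhalf : (1:ℝ)/2 ≤ (P {ω | |ξ ω| ≤ t}).toReal) :
    (∫ x in {x : ℝ | |x| ≤ t}, x ^ 2 ∂(P.map ξ))
        - 2 * (∫ x in {x : ℝ | |x| ≤ t}, x ∂(P.map ξ)) ^ 2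
      ≤ ∫ ω in {ω | |ξ ω| ≤ t ∧ |η ω| ≤ t}, (ξ ω - η ω) ^ 2 ∂P := by
  have hball : {x : ℝ | |x| ≤ t} = Metric.closedBall 0 t := by ext; simp
  have hS : MeasurableSet {x : ℝ | |x| ≤ t} := hball ▸ measurableSet_closedBall
  have hint {f : ℝ → ℝ} (hf : Continuous f) : IntegrableOn f {x | |x| ≤ t} (P.map ξ) :=
    hball ▸ hf.continuousOn.integrableOn_compact (isCompact_closedBall 0 t)
  have hp : (P.map ξ).real {x | |x| ≤ t} = (P {ω | |ξ ω| ≤ t}).toReal :=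
    map_measureReal_apply_of_aemeasurable hid.aemeasurable_fst hS
  have hs : 0 ≤ ∫ x in {x : ℝ | |x| ≤ t}, x ^ 2 ∂(P.map ξ) := integral_nonneg fun x ↦ sq_nonneg x
  change _ ≤ ∫ ω in ξ ⁻¹' {x | |x| ≤ t} ∩ η ⁻¹' {x | |x| ≤ t}, _ ∂P
  rw [hid.setIntegral_sub_sq_of_indepFun hindep hS (hint continuous_id) (hint (continuous_pow 2)),
    hp]
  nlinarith [mul_nonneg hs (by linarith : (0 : ℝ) ≤ 2 * (P {ω | |ξ ω| ≤ t}).toReal - 1)]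

theorem stmt_11 {Ω : Type*} [MeasurableSpace Ω] (P : Measure Ω) [IsProbabilityMeasure P]
    (ξ η : Ω → ℝ) (hξ : Measurable ξ) (hη : Measurable η)
    (hindep : IndepFun ξ η P) (hid : IdentDistrib ξ η P P)
    (t : ℝ) (ht : 0 < t)
    (hhalf : (1:ℝ)/2 ≤ (P {ω | |ξ ω| ≤ t}).toReal) :
    (∫ x in {x : ℝ | |x| ≤ t}, x ^ 2 ∂(P.map ξ))
        - 2 * (∫ x in {x : ℝ | |x| ≤ t}, x ∂(P.map ξ)) ^ 2
      ≤ ∫ ω in {ω | |ξ ω| ≤ t ∧ |η ω| ≤ t}, (ξ ω - η ω) ^ 2 ∂P :=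
  stmt_11_general P ξ η hindep hid t hhalf
end

section
/- Let μ be a random probability measure on ℝ (a measurable map from a probability space to the space of Borel probability measures) and let (Y_n) be a sequence of random variables that are conditionally i.i.d. given the σ-algebra generated by μ, with conditional distribution μ. Suppose ∫ x² dμ(x) < ∞ a.s. and let X = E[Y_1 | μ] (the conditional mean, i.e., ∫x dμ) and Z = Var(Y_1 | μ) = ∫x² dμ − X². Then N^{-1/2} ∑_{k=1}^N (Y_k − X) converges in distribution to the variance-mixture normal N(0, Z), the distribution with characteristic function t ↦ E[exp(−Z t²/2)]. -/
/-!
Conditionally on `μ`, the sequence `Y` is i.i.d. with law `μ ω`. Concretely, the joint law of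
`(μ, Y)` is the mixture `∫ δ_{μ ω} ⊗ (μ ω)^⊗ℕ dP(ω)`: both measures are finite and agree on the
π-system of rectangles `A ×ˢ ∏ᵢ Bᵢ`, which is what the conditional-expectation hypothesis says
after integrating it over `μ ⁻¹' A`. Hence the characteristic function of the normalised sum is
the `P`-average of the characteristic functions of the normalised sums of an i.i.d. `μ ω`-sequence.
By the classical central limit theorem these converge to `exp (-Z ω t² / 2)` for a.e. `ω`, and
dominated convergence (all integrands have modulus at most `1`) yields the mixture.
-/

open MeasureTheory ProbabilityTheory Filter
open scoped Topology

section

variable {Ω α : Type*} [MeasurableSpace Ω] [MeasurableSpace α]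

lemma measurable_infinitePi_const {ι : Type*} {μ : Ω → Measure α} (hμ : Measurable μ)
    [∀ ω, IsProbabilityMeasure (μ ω)] :
    Measurable fun ω ↦ Measure.infinitePi fun _ : ι ↦ μ ω := by
  refine .measure_of_isPiSystem_of_isProbabilityMeasure generateFrom_squareCylinders.symm
    (isPiSystem_squareCylinders (fun _ ↦ MeasurableSpace.isPiSystem_measurableSet)
      fun _ ↦ .univ) ?_
  rintro _ ⟨s, t, ht, rfl⟩
  simp_rw [Measure.infinitePi_pi _ fun i _ ↦ ht i trivial]
  exact Finset.measurable_prod _ fun i _ ↦ (Measure.measurable_coe (ht i trivial)).comp hμ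

noncomputable def iidKernel (μ : Ω → Measure α) (hμ : Measurable μ)
    [∀ ω, IsProbabilityMeasure (μ ω)] : Kernel Ω (ℕ → α) :=
  ⟨fun ω ↦ Measure.infinitePi fun _ ↦ μ ω, measurable_infinitePi_const hμ⟩

instance {μ : Ω → Measure α} (hμ : Measurable μ) [∀ ω, IsProbabilityMeasure (μ ω)] :
    IsMarkovKernel (iidKernel μ hμ) :=
  ⟨fun _ ↦ by dsimp [iidKernel]; infer_instance⟩

/-- `Y` is conditionally i.i.d. given `σ(μ)`, with conditional law `μ`. -/
def HasCondIIDLaw (Y : ℕ → Ω → α) (μ : Ω → Measure α) (P : Measure Ω) : Prop :=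
  ∀ (J : Finset ℕ) (B : ℕ → Set α), (∀ i, MeasurableSet (B i)) →
    P[fun ω ↦ ∏ i ∈ J, (B i).indicator (fun _ ↦ (1 : ℝ)) (Y i ω) |
        MeasurableSpace.comap μ inferInstance]
      =ᵐ[P] fun ω ↦ ∏ i ∈ J, (μ ω (B i)).toReal

namespace HasCondIIDLaw

variable {P : Measure Ω} [IsProbabilityMeasure P] {μ : Ω → Measure α}
  [∀ ω, IsProbabilityMeasure (μ ω)] {Y : ℕ → Ω → α}
  (hcond : HasCondIIDLaw Y μ P) (hμ : Measurable μ) (hY : ∀ k, Measurable (Y k))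
include hcond hμ hY

lemma measure_inter_biInter_preimage {A : Set (Measure α)} (hA : MeasurableSet A)
    (s : Finset ℕ) {t : ℕ → Set α} (ht : ∀ i, MeasurableSet (t i)) :
    P (μ ⁻¹' A ∩ ⋂ i ∈ s, Y i ⁻¹' t i) = ∫⁻ ω in μ ⁻¹' A, ∏ i ∈ s, μ ω (t i) ∂P := by
  have hm : MeasurableSpace.comap μ inferInstance ≤ ‹MeasurableSpace Ω› := hμ.comap_le
  have hAm : MeasurableSet[MeasurableSpace.comap μ inferInstance] (μ ⁻¹' A) := ⟨A, hA, rfl⟩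
  have hS : MeasurableSet (⋂ i ∈ s, Y i ⁻¹' t i) :=
    .biInter s.countable_toSet fun i _ ↦ hY i (ht i)
  have hind : (fun ω ↦ ∏ i ∈ s, (t i).indicator (fun _ ↦ (1 : ℝ)) (Y i ω))
      = (⋂ i ∈ s, Y i ⁻¹' t i).indicator 1 := by
    ext ω
    have hpre : ∀ i, (t i).indicator (fun _ ↦ (1 : ℝ)) (Y i ω) = (Y i ⁻¹' t i).indicator 1 ω :=
      fun _ ↦ rfl
    simp_rw [hpre, prod_indicator_const_apply, one_pow]
  have hF : Integrable ((⋂ i ∈ s, Y i ⁻¹' t i).indicator (1 : Ω → ℝ)) P :=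
    (integrable_const 1).indicator hS
  calc P (μ ⁻¹' A ∩ ⋂ i ∈ s, Y i ⁻¹' t i)
      = ENNReal.ofReal (∫ ω in μ ⁻¹' A, (⋂ i ∈ s, Y i ⁻¹' t i).indicator 1 ω ∂P) := by
        rw [integral_indicator_one hS, Measure.real, Measure.restrict_apply hS, Set.inter_comm,
          ENNReal.ofReal_toReal (measure_ne_top _ _)]
    _ = ENNReal.ofReal (∫ ω in μ ⁻¹' A, ∏ i ∈ s, (μ ω (t i)).toReal ∂P) := by
        rw [← hind, ← setIntegral_condExp hm (hind ▸ hF) hAm]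
        congr 1
        exact setIntegral_congr_ae (hm _ hAm) ((hcond s t ht).mono fun ω h _ ↦ h)
    _ = ∫⁻ ω in μ ⁻¹' A, ∏ i ∈ s, μ ω (t i) ∂P := by
        rw [ofReal_integral_eq_lintegral_ofReal
          (integrable_condExp.congr (hcond s t ht)).integrableOn
          (.of_forall fun ω ↦ Finset.prod_nonneg fun _ _ ↦ ENNReal.toReal_nonneg)]
        refine lintegral_congr fun ω ↦ ?_
        rw [ENNReal.ofReal_prod_of_nonneg fun _ _ ↦ ENNReal.toReal_nonneg]
        exact Finset.prod_congr rfl fun i _ ↦ ENNReal.ofReal_toReal (measure_ne_top _ _)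

theorem map_prodMk_eq_map_compProd :
    P.map (fun ω ↦ (μ ω, fun k ↦ Y k ω)) = (P ⊗ₘ iidKernel μ hμ).map (Prod.map μ id) := by
  have hmeas : Measurable fun ω ↦ (μ ω, fun k ↦ Y k ω) := hμ.prodMk (measurable_pi_lambda _ hY)
  have hμid : Measurable (Prod.map μ (id : (ℕ → α) → ℕ → α)) := hμ.prodMap measurable_id
  have hspan : IsCountablySpanning (squareCylinders fun _ : ℕ ↦ {s : Set α | MeasurableSet s}) :=
    ⟨fun _ ↦ Set.univ, fun _ ↦ ⟨∅, fun _ ↦ Set.univ, fun _ _ ↦ .univ, by simp⟩,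
      Set.iUnion_const _⟩
  refine ext_of_generate_finite _ (generateFrom_eq_prod MeasurableSpace.generateFrom_measurableSet
    generateFrom_squareCylinders isCountablySpanning_measurableSet hspan).symm
    (MeasurableSpace.isPiSystem_measurableSet.prod
      (isPiSystem_squareCylinders (fun _ ↦ MeasurableSpace.isPiSystem_measurableSet)
        fun _ ↦ .univ)) ?_ (by simp [Measure.map_apply hmeas .univ, Measure.map_apply hμid .univ])
  rintro _ ⟨A, hA, _, ⟨s, t, ht, rfl⟩, rfl⟩
  replace hA : MeasurableSet A := hA
  have ht' : ∀ i, MeasurableSet (t i) := fun i ↦ ht i trivial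
  have hbox : MeasurableSet ((s : Set ℕ).pi t) := .pi s.countable_toSet fun i _ ↦ ht' i
  rw [Measure.map_apply hmeas (hA.prod hbox), Measure.map_apply hμid (hA.prod hbox),
    Set.preimage_prod_map_prod, Set.preimage_id, Measure.compProd_apply_prod (hμ hA) hbox]
  simp only [iidKernel, Kernel.coe_mk, Measure.infinitePi_pi _ fun i _ ↦ ht' i]
  rw [← hcond.measure_inter_biInter_preimage hμ hY hA s ht']
  congr 1
  ext ω
  simp

theorem integral_comp_eq {E : Type*} [NormedAddCommGroup E] [NormedSpace ℝ E]
    {F : Measure α × (ℕ → α) → E} (hF : StronglyMeasurable F) {C : ℝ} (hC : ∀ x, ‖F x‖ ≤ C) :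
    ∫ ω, F (μ ω, fun k ↦ Y k ω) ∂P = ∫ ω, ∫ y, F (μ ω, y) ∂(Measure.infinitePi fun _ ↦ μ ω) ∂P := by
  have hmeas : Measurable fun ω ↦ (μ ω, fun k ↦ Y k ω) := hμ.prodMk (measurable_pi_lambda _ hY)
  have hμid : Measurable (Prod.map μ (id : (ℕ → α) → ℕ → α)) := hμ.prodMap measurable_id
  rw [← integral_map hmeas.aemeasurable hF.aestronglyMeasurable,
    hcond.map_prodMk_eq_map_compProd hμ hY,
    integral_map hμid.aemeasurable hF.aestronglyMeasurable]
  exact Measure.integral_compProd (f := F ∘ Prod.map μ id)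
    (.of_bound (hF.comp_measurable hμid).aestronglyMeasurable C (.of_forall fun _ ↦ hC _))

end HasCondIIDLaw

end

open Complex in
theorem tendsto_integral_cexp_sum_infinitePi (ν : Measure ℝ) [IsProbabilityMeasure ν]
    (hν : MemLp id 2 ν) (t : ℝ) :
    Tendsto (fun N : ℕ ↦ ∫ y, cexp (I * t *
        (((∑ k ∈ Finset.Icc 1 N, (y k - ∫ x, x ∂ν)) / √N : ℝ) : ℂ))
        ∂(Measure.infinitePi fun _ ↦ ν)) atTop (𝓝 (cexp (-(Var[id; ν] : ℂ) * t ^ 2 / 2))) := by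
  set Q := Measure.infinitePi fun _ : ℕ ↦ ν
  -- shifted coordinates, so that the sum over `Icc 1 N` becomes the CLT's sum over `range N`
  set X : ℕ → (ℕ → ℝ) → ℝ := fun k y ↦ y (k + 1)
  have hlaw : ∀ k, IdentDistrib (X k) id Q ν := fun k ↦
    ⟨by fun_prop, by fun_prop, by simpa [X] using Measure.infinitePi_map_eval _ (k + 1)⟩
  have hindep : iIndepFun X Q :=
    (iIndepFun_infinitePi (X := fun _ ↦ id) fun _ ↦ measurable_id).precomp (add_left_injective 1)
  have hclt := tendstoInDistribution_inv_sqrt_mul_sum_sub HasLaw.id ((hlaw 0).memLp_iff.2 hν)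
    hindep fun i ↦ (hlaw i).trans (hlaw 0).symm
  have hchar := ProbabilityMeasure.tendsto_iff_tendsto_charFun.1 hclt.tendsto t
  simp only [ProbabilityMeasure.coe_mk, Measure.map_id, charFun_gaussianReal] at hchar
  rw [(hlaw 0).integral_eq, (hlaw 0).variance_eq, Real.coe_toNNReal _ (variance_nonneg _ _)]
    at hchar
  convert hchar using 2 with N
  · rw [charFun_apply_real, integral_map (by fun_prop) (by fun_prop)]
    refine integral_congr_ae (.of_forall fun y ↦ ?_)
    have hsum : ∑ k ∈ Finset.Icc 1 N, (y k - ∫ x, x ∂ν)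
        = ∑ k ∈ Finset.range N, X k y - N * ∫ x, x ∂ν := by
      rw [← Finset.Ico_add_one_right_eq_Icc, Finset.sum_Ico_eq_sum_range, Finset.sum_sub_distrib]
      simp [X, add_comm]
    simp only [hsum, id]
    push_cast
    ring_nf
  · push_cast
    ring_nf

theorem stmt_18 {Ω : Type*} [m0 : MeasurableSpace Ω] (P : Measure Ω) [IsProbabilityMeasure P]
    (μ : Ω → Measure ℝ) (hμmeas : Measurable μ) (hμprob : ∀ ω, IsProbabilityMeasure (μ ω))
    (Y : ℕ → Ω → ℝ) (hY : ∀ k, Measurable (Y k))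
    -- (Y k) are conditionally i.i.d. given the σ-algebra generated by μ,
    -- with conditional distribution μ:
    (hcond : ∀ (J : Finset ℕ) (B : ℕ → Set ℝ), (∀ i, MeasurableSet (B i)) →
      (P[(fun ω => ∏ i ∈ J, Set.indicator (B i) (fun _ => (1:ℝ)) (Y i ω)) |
          MeasurableSpace.comap μ inferInstance])
        =ᵐ[P] fun ω => ∏ i ∈ J, ((μ ω) (B i)).toReal)
    (hsq : ∀ᵐ ω ∂P, Integrable (fun x => x ^ 2) (μ ω))
    (X Z : Ω → ℝ)
    (hX : ∀ ω, X ω = ∫ x, x ∂(μ ω))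
    (hZ : ∀ ω, Z ω = (∫ x, x ^ 2 ∂(μ ω)) - (X ω) ^ 2) :
    -- convergence in distribution to the variance mixture N(0, Z), expressed
    -- through convergence of characteristic functions to t ↦ E[exp(-Z t²/2)]:
    ∀ t : ℝ,
      Tendsto (fun N : ℕ =>
          ∫ ω, Complex.exp (Complex.I * (t : ℂ) *
            (((∑ k ∈ Finset.Icc 1 N, (Y k ω - X ω)) / Real.sqrt N : ℝ) : ℂ)) ∂P)
        atTop
        (nhds (∫ ω, Complex.exp (-(((Z ω) : ℝ) : ℂ) * (t : ℂ) ^ 2 / 2) ∂P)) := by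
  intro t
  have := hμprob
  -- the identity `Measure ℝ → Measure ℝ` seen as a kernel
  have hmean : Measurable fun ν : Measure ℝ ↦ ∫ x, x ∂ν :=
    (stronglyMeasurable_id.integral_kernel (κ := ⟨id, measurable_id⟩)).measurable
  set F : ℕ → Measure ℝ × (ℕ → ℝ) → ℂ := fun N p ↦ Complex.exp (Complex.I * t *
    (((∑ k ∈ Finset.Icc 1 N, (p.2 k - ∫ x, x ∂p.1)) / √N : ℝ) : ℂ))
  have hF : ∀ N, StronglyMeasurable (F N) := fun N ↦ Measurable.stronglyMeasurable (by fun_prop)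
  have hF1 : ∀ N p, ‖F N p‖ ≤ 1 := fun N p ↦ by
    simp only [F, mul_assoc, ← Complex.ofReal_mul, Complex.norm_exp_I_mul_ofReal, le_refl]
  have hmix : ∀ N : ℕ, ∫ ω, Complex.exp (Complex.I * t *
      (((∑ k ∈ Finset.Icc 1 N, (Y k ω - X ω)) / √N : ℝ) : ℂ)) ∂P
        = ∫ ω, ∫ y, F N (μ ω, y) ∂(Measure.infinitePi fun _ ↦ μ ω) ∂P := fun N ↦ by
    simp_rw [hX]
    exact HasCondIIDLaw.integral_comp_eq hcond hμmeas hY (hF N) (hF1 N)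
  simp_rw [hmix]
  refine tendsto_integral_of_dominated_convergence (fun _ ↦ 1) (fun N ↦ ?_) (integrable_const 1)
    (fun N ↦ .of_forall fun ω ↦ ?_) ?_
  · exact ((hF N).comp_measurable (hμmeas.prodMap measurable_id)).integral_kernel_prod_right'
      (κ := iidKernel μ hμmeas) |>.aestronglyMeasurable
  · simpa using norm_integral_le_of_norm_le_const
      (μ := Measure.infinitePi fun _ ↦ μ ω) (.of_forall fun y ↦ hF1 N (μ ω, y))
  · filter_upwards [hsq] with ω hω
    have h2 : MemLp id 2 (μ ω) :=
      (memLp_two_iff_integrable_sq measurable_id.aestronglyMeasurable).2 hω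
    convert tendsto_integral_cexp_sum_infinitePi (μ ω) h2 t using 5
    rw [hZ, hX, variance_eq_sub h2]
    rfl
end
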